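/- For every ε > 0 there exists δ > 0 such that for any Euclidean triangle with all inner angles at least ε and any conformal factor u on its vertices with ‖u‖_∞ ≤ δ, the conformally scaled lengths l̃_{pq} = e^{(u_p+u_q)/2} d_{pq} satisfy the triangle inequalities and each new inner angle differs from the corresponding old one by at most ε/2. -/

import Mathlib

/-!
The angle at `i` is `arccos` of the law-of-cosines quotient `Q`. A conformal change rescales
`x², y², z²` (relative to `2xy`) by exponentials of quantities of size at most `2δ`, so `Q` moves
by `O(δ) · (x² + y² + z²) / (2xy)`. Angles at least `ε` bound every cosine by
`c = cos (min ε 1) < 1`; summing the bounds at the two ends of a side shows that each side is at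
most `c` times the sum of the other two, and this bounds `(x² + y² + z²) / (2xy)` by `3 / (1 - c)`.
The new quotient therefore stays below `1`, which is the triangle inequality, and uniform
continuity of `arccos` turns its closeness to `Q` into closeness of the angles.
-/
open Real

/-- Conformally scaled edge length: `l_{pq} = exp((u p + u q)/2) * d p q`. -/
noncomputable def clen (d : Fin 3 → Fin 3 → ℝ) (u : Fin 3 → ℝ) (p q : Fin 3) : ℝ :=
  Real.exp ((u p + u q) / 2) * d p q

/-- Inner angle at vertex `i` of the triangle with vertices `i j k`, edge lengths given
by the conformal metric `clen d u`, via the law of cosines. -/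
noncomputable def ang (d : Fin 3 → Fin 3 → ℝ) (u : Fin 3 → ℝ) (i j k : Fin 3) : ℝ :=
  Real.arccos ((clen d u i j ^ 2 + clen d u i k ^ 2 - clen d u j k ^ 2) /
    (2 * clen d u i j * clen d u i k))

noncomputable def cot (x : ℝ) : ℝ := Real.cos x / Real.sin x

/-- Law of cosines: the cosine of the angle between the sides `x` and `y` of a triangle whose
third side is `z`. -/
noncomputable def cosOfSides (x y z : ℝ) : ℝ := (x ^ 2 + y ^ 2 - z ^ 2) / (2 * x * y)

lemma cosOfSides_comm (x y z : ℝ) : cosOfSides x y z = cosOfSides y x z := by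
  unfold cosOfSides; ring_nf

lemma lt_add_of_cosOfSides_lt_one {x y z : ℝ} (hx : 0 < x) (hy : 0 < y) (hz : 0 ≤ z)
    (h : cosOfSides x y z < 1) : x < y + z := by
  rw [cosOfSides, div_lt_one (by positivity)] at h
  nlinarith

lemma le_mul_add_of_cosOfSides_le {x y z c : ℝ} (hx : 0 < x) (hy : 0 < y) (hz : 0 < z)
    (hxz : cosOfSides x z y ≤ c) (hyz : cosOfSides y z x ≤ c) : z ≤ c * (x + y) := by
  rw [cosOfSides, div_le_iff₀ (by positivity)] at hxz hyz
  exact le_of_mul_le_mul_left (by linarith) hz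

lemma one_sub_mul_le_of_le_mul_add {x y z c : ℝ} (hy : 0 ≤ y) (hc₀ : 0 ≤ c) (hc₁ : c ≤ 1)
    (hx : x ≤ c * (y + z)) (hz : z ≤ c * (x + y)) : (1 - c) * x ≤ y := by
  have h : (1 + c) * ((1 - c) * x) ≤ (1 + c) * (c * y) := by
    nlinarith [mul_le_mul_of_nonneg_left hz hc₀]
  nlinarith [le_of_mul_le_mul_left h (by linarith)]

lemma sq_add_sq_add_sq_div_le {x y z c : ℝ} (hx : 0 < x) (hy : 0 < y) (hz : 0 < z)
    (hc₀ : 0 ≤ c) (hc₁ : c < 1) (hxy : cosOfSides x y z ≤ c) (hxz : cosOfSides x z y ≤ c)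
    (hyz : cosOfSides y z x ≤ c) :
    (x ^ 2 + y ^ 2 + z ^ 2) / (2 * x * y) ≤ 3 / (1 - c) := by
  have hz' := le_mul_add_of_cosOfSides_le hx hy hz hxz hyz
  have hx' := le_mul_add_of_cosOfSides_le (c := c) hy hz hx
    (by rwa [cosOfSides_comm]) (by rwa [cosOfSides_comm])
  have hy' := le_mul_add_of_cosOfSides_le (c := c) hx hz hy hxy (by rwa [cosOfSides_comm])
  have hxy' := one_sub_mul_le_of_le_mul_add hy.le hc₀ hc₁.le hx' hz'
  have hyx' := one_sub_mul_le_of_le_mul_add hx.le hc₀ hc₁.le (by linarith)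
    (by linarith : z ≤ c * (y + x))
  have hzxy : z ≤ x + y := by nlinarith
  rw [div_le_div_iff₀ (by positivity) (by linarith)]
  nlinarith [mul_le_mul_of_nonneg_left hxy' hx.le, mul_le_mul_of_nonneg_left hyx' hy.le,
    mul_le_mul_of_nonneg_left (pow_le_pow_left₀ hz.le hzxy 2) (by linarith : 0 ≤ 1 - c)]

lemma cosOfSides_mul_sub {x y z p q r : ℝ} (hx : x ≠ 0) (hy : y ≠ 0) (hp : p ≠ 0)
    (hq : q ≠ 0) :
    cosOfSides (p * x) (q * y) (r * z) - cosOfSides x y z =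
      ((p / q - 1) * x ^ 2 + (q / p - 1) * y ^ 2 - (r ^ 2 / (p * q) - 1) * z ^ 2) /
        (2 * x * y) := by
  unfold cosOfSides
  field_simp
  ring

lemma abs_cosOfSides_mul_sub_le {x y z p q r m : ℝ} (hx : 0 < x) (hy : 0 < y)
    (hp : 0 < p) (hq : 0 < q) (hpq : |p / q - 1| ≤ m) (hqp : |q / p - 1| ≤ m)
    (hr : |r ^ 2 / (p * q) - 1| ≤ m) :
    |cosOfSides (p * x) (q * y) (r * z) - cosOfSides x y z| ≤
      m * ((x ^ 2 + y ^ 2 + z ^ 2) / (2 * x * y)) := by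
  have hm : 0 ≤ m := (abs_nonneg _).trans hpq
  rw [cosOfSides_mul_sub hx.ne' hy.ne' hp.ne' hq.ne', abs_div,
    abs_of_pos (by positivity : (0 : ℝ) < 2 * x * y), mul_div_assoc']
  gcongr
  calc _ ≤ |(p / q - 1) * x ^ 2| + |(q / p - 1) * y ^ 2| + |(r ^ 2 / (p * q) - 1) * z ^ 2| := by
        have h := abs_add_three ((p / q - 1) * x ^ 2) ((q / p - 1) * y ^ 2)
          (-((r ^ 2 / (p * q) - 1) * z ^ 2))
        rwa [abs_neg, ← sub_eq_add_neg] at h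
    _ ≤ m * x ^ 2 + m * y ^ 2 + m * z ^ 2 := by
        simp only [abs_mul, abs_sq]
        gcongr
    _ = m * (x ^ 2 + y ^ 2 + z ^ 2) := by ring

lemma abs_cosOfSides_conformal_sub_le {x y z a b e δ : ℝ} (hx : 0 < x) (hy : 0 < y)
    (ha : |a| ≤ δ) (hb : |b| ≤ δ) (he : |e| ≤ δ) (hδ : δ ≤ 1 / 4) :
    |cosOfSides (exp ((a + b) / 2) * x) (exp ((a + e) / 2) * y) (exp ((b + e) / 2) * z) -
        cosOfSides x y z| ≤ 4 * δ * ((x ^ 2 + y ^ 2 + z ^ 2) / (2 * x * y)) := by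
  have hexp : ∀ s, |s| ≤ 2 * δ → |exp s - 1| ≤ 4 * δ := fun s hs =>
    (abs_exp_sub_one_le (by linarith)).trans (by linarith)
  rw [abs_le] at ha hb he
  apply abs_cosOfSides_mul_sub_le hx hy (exp_pos _) (exp_pos _)
  · rw [← exp_sub]
    exact hexp _ (abs_le.2 ⟨by linarith, by linarith⟩)
  · rw [← exp_sub]
    exact hexp _ (abs_le.2 ⟨by linarith, by linarith⟩)
  · rw [sq, ← exp_add, ← exp_add, ← exp_sub]
    exact hexp _ (abs_le.2 ⟨by linarith, by linarith⟩)

lemma le_cos_of_le_arccos {x θ : ℝ} (hθ₀ : 0 < θ) (h : θ ≤ arccos x) : x ≤ cos θ := by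
  have hx₁ : x < 1 := arccos_pos.1 (hθ₀.trans_le h)
  calc x ≤ cos (arccos x) := by
        rcases le_total (-1) x with hx | hx
        · rw [cos_arccos hx hx₁.le]
        · rwa [arccos_of_le_neg_one hx, cos_pi]
    _ ≤ cos θ := cos_le_cos_of_nonneg_of_le_pi hθ₀.le (arccos_le_pi x) h

/-- `arccos` is constant outside `[-1, 1]`, so it factors through the compact interval. -/
lemma uniformContinuous_arccos : UniformContinuous arccos := by
  have h : arccos =
      (fun t : Set.Icc (-1 : ℝ) 1 => arccos t) ∘ Set.projIcc (-1) 1 (neg_le_self zero_le_one) := by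
    funext x
    simp [arccos, arcsin_projIcc]
  rw [h]
  exact (CompactSpace.uniformContinuous_of_continuous
    (continuous_arccos.comp continuous_subtype_val)).comp
    (LipschitzWith.projIcc _).uniformContinuous

lemma ang_eq (d : Fin 3 → Fin 3 → ℝ) (u : Fin 3 → ℝ) (i j k : Fin 3) :
    ang d u i j k = arccos (cosOfSides (clen d u i j) (clen d u i k) (clen d u j k)) := rfl

lemma ang_zero (d : Fin 3 → Fin 3 → ℝ) (i j k : Fin 3) :
    ang d 0 i j k = arccos (cosOfSides (d i j) (d i k) (d j k)) := by
  simp [ang_eq, clen]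

lemma abs_cosOfSides_clen_sub_le {d : Fin 3 → Fin 3 → ℝ} {u : Fin 3 → ℝ} {c δ : ℝ}
    (hd : ∀ p q, p ≠ q → 0 < d p q) (hsymm : ∀ p q, d p q = d q p) (hc₀ : 0 ≤ c) (hc₁ : c < 1)
    (hcos : ∀ i j k : Fin 3, i ≠ j → i ≠ k → j ≠ k → cosOfSides (d i j) (d i k) (d j k) ≤ c)
    (hu : ∀ p, |u p| ≤ δ) (hδ : δ ≤ 1 / 4) {i j k : Fin 3} (hij : i ≠ j) (hik : i ≠ k)
    (hjk : j ≠ k) :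
    |cosOfSides (clen d u i j) (clen d u i k) (clen d u j k) -
        cosOfSides (d i j) (d i k) (d j k)| ≤ 4 * δ * (3 / (1 - c)) := by
  have hj := hcos j i k hij.symm hjk hik
  have hk := hcos k i j hik.symm hjk.symm hij
  rw [hsymm j i] at hj
  rw [hsymm k i, hsymm k j] at hk
  have hδ₀ : 0 ≤ δ := (abs_nonneg _).trans (hu i)
  calc _ ≤ 4 * δ * ((d i j ^ 2 + d i k ^ 2 + d j k ^ 2) / (2 * d i j * d i k)) :=
        abs_cosOfSides_conformal_sub_le (hd i j hij) (hd i k hik) (hu i) (hu j) (hu k) hδ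
    _ ≤ 4 * δ * (3 / (1 - c)) := mul_le_mul_of_nonneg_left
        (sq_add_sq_add_sq_div_le (hd i j hij) (hd i k hik) (hd j k hjk) hc₀ hc₁
          (hcos i j k hij hik hjk) hj hk) (by linarith)

theorem angle_stability_under_small_conformal_factor :
    ∀ ε > (0 : ℝ), ∃ δ > (0 : ℝ),
      ∀ d : Fin 3 → Fin 3 → ℝ, (∀ p q, p ≠ q → 0 < d p q) → (∀ p q, d p q = d q p) →
      (∀ i j k : Fin 3, i ≠ j → i ≠ k → j ≠ k →
          d i j < d i k + d j k) →
      (∀ i j k : Fin 3, i ≠ j → i ≠ k → j ≠ k → ε ≤ ang d 0 i j k) →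
      ∀ u : Fin 3 → ℝ, (∀ p, |u p| ≤ δ) →
        (∀ i j k : Fin 3, i ≠ j → i ≠ k → j ≠ k →
            clen d u i j < clen d u i k + clen d u j k) ∧
        (∀ i j k : Fin 3, i ≠ j → i ≠ k → j ≠ k →
            |ang d u i j k - ang d 0 i j k| ≤ ε / 2) := by
  intro ε hε
  obtain ⟨η, hη, harccos⟩ := Metric.uniformContinuous_iff.1 uniformContinuous_arccos _ (half_pos hε)
  have hθ : 0 < min ε 1 := lt_min hε one_pos
  have hθπ : min ε 1 ≤ π / 2 := (min_le_right _ _).trans (by linarith [pi_gt_three])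
  set c := cos (min ε 1)
  have hc₀ : 0 ≤ c := cos_nonneg_of_mem_Icc ⟨by linarith, hθπ⟩
  have hc₁ : c < 1 := by simpa using cos_lt_cos_of_nonneg_of_le_pi_div_two le_rfl hθπ hθ
  obtain ⟨δ, hδ, hδsmall⟩ := exists_pos_mul_lt (lt_min hη (sub_pos.2 hc₁)) (4 * (3 / (1 - c)))
  refine ⟨min δ (1 / 4), lt_min hδ (by norm_num), fun d hd hsymm _ hang u hu => ?_⟩
  have hcos (i j k : Fin 3) (hij : i ≠ j) (hik : i ≠ k) (hjk : j ≠ k) :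
      cosOfSides (d i j) (d i k) (d j k) ≤ c :=
    le_cos_of_le_arccos hθ ((min_le_left _ _).trans (ang_zero d i j k ▸ hang i j k hij hik hjk))
  have hclose (i j k : Fin 3) (hij : i ≠ j) (hik : i ≠ k) (hjk : j ≠ k) :
      |cosOfSides (clen d u i j) (clen d u i k) (clen d u j k) -
        cosOfSides (d i j) (d i k) (d j k)| < min η (1 - c) := by
    refine (abs_cosOfSides_clen_sub_le hd hsymm hc₀ hc₁ hcos hu (min_le_right _ _)
      hij hik hjk).trans_lt (lt_of_le_of_lt ?_ hδsmall)
    have hK : 0 ≤ 3 / (1 - c) := div_nonneg zero_le_three (sub_pos.2 hc₁).le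
    nlinarith [min_le_left δ (1 / 4)]
  refine ⟨fun i j k hij hik hjk => ?_, fun i j k hij hik hjk => ?_⟩
  · have hQ := abs_lt.1 (hclose i j k hij hik hjk)
    exact lt_add_of_cosOfSides_lt_one (mul_pos (exp_pos _) (hd i j hij))
      (mul_pos (exp_pos _) (hd i k hik)) (mul_pos (exp_pos _) (hd j k hjk)).le
      (by linarith [hcos i j k hij hik hjk, min_le_right η (1 - c)])
  · rw [ang_eq, ang_zero, ← Real.dist_eq]
    exact (harccos ((hclose i j k hij hik hjk).trans_le (min_le_left _ _))).le
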